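/- For a fan Δ in N_ℝ with M the dual lattice, the ring PExp(Δ) of integral piecewise exponential functions is isomorphic to the inverse limit (over the face poset of Δ) of the rings ℤ[M/(σ^⊥ ∩ M)]: explicitly, PExp(Δ) ≅ { (ρ_σ) ∈ ∏_{σ∈Δ} ℤ[M_σ] : ρ_σ restricts to ρ_τ whenever τ is a face of σ }, where M_σ = M/(σ^⊥ ∩ M). -/

import Mathlib

open scoped BigOperators

def pairing {n : ℕ} (u : Fin n → ℤ) (v : Fin n → ℝ) : ℝ := ∑ i, (u i : ℝ) * v i

lemma pairing_add {n : ℕ} (u u' : Fin n → ℤ) (v : Fin n → ℝ) :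
    pairing (u + u') v = pairing u v + pairing u' v := by
  simp [pairing, add_mul, Finset.sum_add_distrib]

lemma pairing_neg {n : ℕ} (u : Fin n → ℤ) (v : Fin n → ℝ) :
    pairing (-u) v = -pairing u v := by
  simp [pairing, Finset.sum_neg_distrib]

/-- Evaluation of `ℤ[M]` at `v ∈ N_ℝ`, sending `e^u` to `exp⟨u, v⟩`. -/
noncomputable def evalAt {n : ℕ} (v : Fin n → ℝ) :
    AddMonoidAlgebra ℤ (Fin n → ℤ) →+* ℝ :=
  ((AddMonoidAlgebra.lift ℤ ℝ (Fin n → ℤ))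
    { toFun := fun u => Real.exp (pairing (Multiplicative.toAdd u) v)
      map_one' := by simp [pairing]
      map_mul' := by
        intro x y
        simp [pairing_add, Real.exp_add] }).toRingHom

/-- For a function `f` defined on the support `|Δ|`, the condition
`f|_σ ∈ Exp(Span σ)`. -/
def IsExpOnSub {n : ℕ} {supp : Set (Fin n → ℝ)} (s : Set (Fin n → ℝ))
    (f : supp → ℝ) : Prop :=
  ∃ a : AddMonoidAlgebra ℤ (Fin n → ℤ), ∀ v : supp, (v : Fin n → ℝ) ∈ s → f v = evalAt v a

/-- The ring `PExp(Δ)` of integral piecewise exponential functions `|Δ| → ℝ`. -/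
noncomputable def pexpSubring {n : ℕ} {ι : Type} (cones : ι → Set (Fin n → ℝ)) :
    Subring ((⋃ i, cones i : Set (Fin n → ℝ)) → ℝ) where
  carrier := { f | ∀ i, IsExpOnSub (cones i) f }
  one_mem' := fun i => ⟨1, fun v _ => by simp⟩
  mul_mem' := fun {f g} hf hg i => by
    obtain ⟨a, ha⟩ := hf i
    obtain ⟨b, hb⟩ := hg i
    exact ⟨a * b, fun v hv => by simp [ha v hv, hb v hv]⟩
  add_mem' := fun {f g} hf hg i => by
    obtain ⟨a, ha⟩ := hf i
    obtain ⟨b, hb⟩ := hg i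
    exact ⟨a + b, fun v hv => by simp [ha v hv, hb v hv]⟩
  zero_mem' := fun i => ⟨0, fun v _ => by simp⟩
  neg_mem' := fun {f} hf i => by
    obtain ⟨a, ha⟩ := hf i
    exact ⟨-a, fun v hv => by simp [ha v hv]⟩

/-- `σ^⊥ ∩ M`: the subgroup of lattice functionals vanishing on `σ`. -/
def perpLattice {n : ℕ} (σ : Set (Fin n → ℝ)) : AddSubgroup (Fin n → ℤ) where
  carrier := { u | ∀ v ∈ σ, pairing u v = 0 }
  zero_mem' := fun v _ => by simp [pairing]
  add_mem' := fun {u u'} hu hu' v hv => by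
    simp [pairing_add, hu v hv, hu' v hv]
  neg_mem' := fun {u} hu v hv => by simp [pairing_neg, hu v hv]

/-- The quotient lattice `M_σ = M/(σ^⊥ ∩ M)`. -/
abbrev Mq {n : ℕ} (σ : Set (Fin n → ℝ)) : Type := (Fin n → ℤ) ⧸ perpLattice σ

/-- The pairing with a point `v ∈ σ` descends to `M_σ`. -/
noncomputable def pairingQuot {n : ℕ} (σ : Set (Fin n → ℝ)) (v : Fin n → ℝ)
    (hv : v ∈ σ) : Mq σ →+ ℝ :=
  QuotientAddGroup.lift (perpLattice σ)
    { toFun := fun u => pairing u v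
      map_zero' := by simp [pairing]
      map_add' := fun u u' => pairing_add u u' v }
    (fun u hu => hu v hv)

/-- Evaluation of `ℤ[M_σ]` at a point `v ∈ σ`, as a ring homomorphism. -/
noncomputable def evalQAt {n : ℕ} (σ : Set (Fin n → ℝ)) (v : Fin n → ℝ)
    (hv : v ∈ σ) : AddMonoidAlgebra ℤ (Mq σ) →+* ℝ :=
  ((AddMonoidAlgebra.lift ℤ ℝ (Mq σ))
    { toFun := fun m => Real.exp (pairingQuot σ v hv (Multiplicative.toAdd m))
      map_one' := by simp
      map_mul' := by
        intro x y
        simp [Real.exp_add] }).toRingHom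

/-- For `τ ⊆ σ` (e.g. `τ` a face of `σ`), the natural surjection `M_σ → M_τ`
induces a restriction map `ℤ[M_σ] → ℤ[M_τ]`. -/
noncomputable def restrictq {n : ℕ} {τ σ : Set (Fin n → ℝ)} (h : τ ⊆ σ) :
    AddMonoidAlgebra ℤ (Mq σ) →+* AddMonoidAlgebra ℤ (Mq τ) :=
  AddMonoidAlgebra.mapDomainRingHom ℤ
    (QuotientAddGroup.map (perpLattice σ) (perpLattice τ) (AddMonoidHom.id _)
      (fun u hu v hv => hu v (h hv)))

/-- The subring of `∏_{σ ∈ Δ} ℤ[M_σ]` consisting of compatible tuples: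
`ρ_σ` restricts to `ρ_τ` whenever `τ ⪯ σ`. -/
noncomputable def compatSubring {n : ℕ} {ι : Type} (cones : ι → Set (Fin n → ℝ)) :
    Subring (Π i, AddMonoidAlgebra ℤ (Mq (cones i))) where
  carrier := { ρ | ∀ i j (h : cones j ⊆ cones i), restrictq h (ρ i) = ρ j }
  one_mem' := fun i j h => by simp
  mul_mem' := fun {ρ ρ'} hρ hρ' i j h => by
    simp [map_mul, hρ i j h, hρ' i j h]
  add_mem' := fun {ρ ρ'} hρ hρ' i j h => by
    simp [map_add, hρ i j h, hρ' i j h]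
  zero_mem' := fun i j h => by simp
  neg_mem' := fun {ρ} hρ i j h => by simp [map_neg, hρ i j h]

/-!
On each cone `σ` evaluation identifies `ℤ[M_σ]` with a ring of functions on `σ`: the
exponentials `exp ⟨m, ·⟩` for distinct `m ∈ M_σ` are distinct characters of the monoid `σ`,
hence linearly independent. A compatible tuple is therefore a family of exponential functions on
the cones agreeing on faces; as two cones meet in a common cone, they agree on overlaps and glue
to a function on `|Δ|`. Conversely the restrictions of a piecewise exponential function form a
compatible tuple, because every element of `ℤ[M_σ]` lifts to `ℤ[M]`.
-/

open AddMonoidAlgebra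

section Evaluation

variable {n : ℕ}

lemma pairingQuot_mk (σ : Set (Fin n → ℝ)) {v : Fin n → ℝ} (hv : v ∈ σ) (u : Fin n → ℤ) :
    pairingQuot σ v hv (u : Mq σ) = pairing u v := rfl

lemma evalAt_single (v : Fin n → ℝ) (u : Fin n → ℤ) (c : ℤ) :
    evalAt v (single u c) = c • Real.exp (pairing u v) := by
  simp [evalAt]

lemma evalQAt_single (σ : Set (Fin n → ℝ)) {v : Fin n → ℝ} (hv : v ∈ σ) (m : Mq σ) (c : ℤ) :
    evalQAt σ v hv (single m c) = c • Real.exp (pairingQuot σ v hv m) := by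
  simp [evalQAt]

lemma evalQAt_restrictq {τ σ : Set (Fin n → ℝ)} (h : τ ⊆ σ) {v : Fin n → ℝ} (hv : v ∈ τ)
    (a : ℤ[Mq σ]) : evalQAt τ v hv (restrictq h a) = evalQAt σ v (h hv) a := by
  induction a using AddMonoidAlgebra.induction_linear with
  | zero => simp
  | add a b ha hb => simp only [map_add, ha, hb]
  | single m c =>
    induction m using QuotientAddGroup.induction_on with
    | H u => simp only [restrictq, mapDomainRingHom_apply, mapDomain_single, evalQAt_single]; rfl

lemma evalQAt_mapDomain_mk (σ : Set (Fin n → ℝ)) {v : Fin n → ℝ} (hv : v ∈ σ)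
    (a : ℤ[Fin n → ℤ]) :
    evalQAt σ v hv (mapDomainRingHom ℤ (QuotientAddGroup.mk' (perpLattice σ)) a) =
      evalAt v a := by
  induction a using AddMonoidAlgebra.induction_linear with
  | zero => simp
  | add a b ha hb => simp only [map_add, ha, hb]
  | single u c => simp [evalQAt_single, evalAt_single, pairingQuot_mk]

lemma mapDomainRingHom_surjective {R M N : Type*} [Semiring R] [AddMonoid M] [AddMonoid N]
    {f : M →+ N} (hf : Function.Surjective f) :
    Function.Surjective (mapDomainRingHom R f) := fun b =>
  let ⟨a, ha⟩ := Finsupp.mapDomain_surjective hf b.coeff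
  ⟨.ofCoeff a, by ext1; exact ha⟩

end Evaluation

section Independence

variable {n : ℕ}

noncomputable def coneChar (S : AddSubmonoid (Fin n → ℝ)) (m : Mq (S : Set (Fin n → ℝ))) :
    Multiplicative S →* ℝ where
  toFun v := Real.exp
    (pairingQuot (S : Set (Fin n → ℝ)) (Multiplicative.toAdd v : S) (Multiplicative.toAdd v).2 m)
  map_one' := by
    induction m using QuotientAddGroup.induction_on with
    | H u => simp [pairingQuot_mk, pairing]
  map_mul' v w := by
    induction m using QuotientAddGroup.induction_on with
    | H u => simp [pairingQuot_mk, pairing, mul_add, Finset.sum_add_distrib, Real.exp_add]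

lemma coneChar_injective (S : AddSubmonoid (Fin n → ℝ)) : Function.Injective (coneChar S) := by
  intro m m' h
  induction m using QuotientAddGroup.induction_on with
  | H u =>
  induction m' using QuotientAddGroup.induction_on with
  | H u' =>
  refine (QuotientAddGroup.eq).2 fun v hv => ?_
  have huv : pairing u v = pairing u' v :=
    Real.exp_injective (DFunLike.congr_fun h (.ofAdd ⟨v, hv⟩))
  rw [pairing_add, pairing_neg, huv, neg_add_cancel]

lemma evalQAt_eq_linearCombination (S : AddSubmonoid (Fin n → ℝ))
    (a : ℤ[Mq (S : Set (Fin n → ℝ))]) (v : Multiplicative S) :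
    evalQAt (S : Set (Fin n → ℝ)) (Multiplicative.toAdd v : S) (Multiplicative.toAdd v).2 a =
      Finsupp.linearCombination ℤ (fun m => ⇑(coneChar S m)) a.coeff v := by
  rw [Finsupp.linearCombination_apply, Finsupp.sum_apply']
  simp [evalQAt, AddMonoidAlgebra.lift_apply, coneChar]

theorem eq_of_forall_evalQAt_eq {σ : Set (Fin n → ℝ)}
    (hσ : ∃ S : AddSubmonoid (Fin n → ℝ), (S : Set (Fin n → ℝ)) = σ) {a b : ℤ[Mq σ]}
    (h : ∀ v (hv : v ∈ σ), evalQAt σ v hv a = evalQAt σ v hv b) : a = b := by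
  obtain ⟨S, rfl⟩ := hσ
  have hind : LinearIndependent ℤ fun m => ⇑(coneChar S m) :=
    ((linearIndependent_monoidHom _ ℝ).comp _ (coneChar_injective S)).restrict_scalars' ℤ
  refine coeff_injective (hind.finsuppLinearCombination_injective (funext fun v => ?_))
  rw [← evalQAt_eq_linearCombination, ← evalQAt_eq_linearCombination]
  exact h _ _

end Independence

lemma exists_addSubmonoid_coe_eq_nonnegCombinations {n : ℕ} (S : Finset (Fin n → ℤ)) :
    ∃ T : AddSubmonoid (Fin n → ℝ), (T : Set (Fin n → ℝ)) =
      { v | ∃ c : (Fin n → ℤ) → ℝ, (∀ g, 0 ≤ c g) ∧ v = ∑ g ∈ S, c g • (fun k => (g k : ℝ)) } := by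
  refine ⟨{ carrier := _, add_mem' := ?_, zero_mem' := ?_ }, rfl⟩
  · rintro _ _ ⟨c, hc, rfl⟩ ⟨c', hc', rfl⟩
    exact ⟨c + c', fun g => add_nonneg (hc g) (hc' g), by simp [add_smul, Finset.sum_add_distrib]⟩
  · exact ⟨0, fun _ => le_rfl, by simp⟩

section Gluing

variable {n : ℕ} {ι : Type} {cones : ι → Set (Fin n → ℝ)}

noncomputable def glueCompat (cones : ι → Set (Fin n → ℝ)) :
    compatSubring cones →+* ((⋃ i, cones i : Set (Fin n → ℝ)) → ℝ) :=
  RingHom.pi fun v =>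
    (evalQAt _ v (Set.mem_iUnion.1 v.2).choose_spec).comp
      ((Pi.evalRingHom _ (Set.mem_iUnion.1 v.2).choose).comp (compatSubring cones).subtype)

lemma evalQAt_eq_of_mem_compatSubring (hint : ∀ i j, ∃ k, cones i ∩ cones j = cones k)
    {ρ : Π i, ℤ[Mq (cones i)]} (hρ : ρ ∈ compatSubring cones) {v : Fin n → ℝ} {i j : ι}
    (hi : v ∈ cones i) (hj : v ∈ cones j) :
    evalQAt (cones i) v hi (ρ i) = evalQAt (cones j) v hj (ρ j) := by
  obtain ⟨k, hk⟩ := hint i j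
  have hki : cones k ⊆ cones i := hk ▸ Set.inter_subset_left
  have hkj : cones k ⊆ cones j := hk ▸ Set.inter_subset_right
  have hv : v ∈ cones k := hk ▸ ⟨hi, hj⟩
  rw [← evalQAt_restrictq hki hv, ← evalQAt_restrictq hkj hv, hρ i k hki, hρ j k hkj]

lemma glueCompat_apply (hint : ∀ i j, ∃ k, cones i ∩ cones j = cones k)
    (ρ : compatSubring cones) (v : (⋃ i, cones i : Set (Fin n → ℝ))) {i : ι}
    (hv : (v : Fin n → ℝ) ∈ cones i) : glueCompat cones ρ v = evalQAt (cones i) v hv (ρ.1 i) :=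
  evalQAt_eq_of_mem_compatSubring hint ρ.2 _ hv

lemma glueCompat_mem_pexpSubring (hint : ∀ i j, ∃ k, cones i ∩ cones j = cones k)
    (ρ : compatSubring cones) : glueCompat cones ρ ∈ pexpSubring cones := by
  intro i
  obtain ⟨a, ha⟩ := mapDomainRingHom_surjective (QuotientAddGroup.mk'_surjective _) (ρ.1 i)
  refine ⟨a, fun v hv => ?_⟩
  rw [glueCompat_apply hint ρ v hv, ← ha, evalQAt_mapDomain_mk]

lemma glueCompat_injective (hint : ∀ i j, ∃ k, cones i ∩ cones j = cones k)
    (hcone : ∀ i, ∃ S : AddSubmonoid (Fin n → ℝ), (S : Set (Fin n → ℝ)) = cones i) :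
    Function.Injective (glueCompat cones) := by
  intro ρ ρ' h
  refine Subtype.ext (funext fun i => eq_of_forall_evalQAt_eq (hcone i) fun v hv => ?_)
  have hvU : v ∈ ⋃ i, cones i := Set.mem_iUnion.2 ⟨i, hv⟩
  rw [← glueCompat_apply hint ρ ⟨v, hvU⟩ hv, ← glueCompat_apply hint ρ' ⟨v, hvU⟩ hv, h]

lemma exists_glueCompat_eq (hint : ∀ i j, ∃ k, cones i ∩ cones j = cones k)
    (hcone : ∀ i, ∃ S : AddSubmonoid (Fin n → ℝ), (S : Set (Fin n → ℝ)) = cones i)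
    {f : (⋃ i, cones i : Set (Fin n → ℝ)) → ℝ} (hf : f ∈ pexpSubring cones) :
    ∃ ρ, glueCompat cones ρ = f := by
  choose a ha using hf
  let ρ i : ℤ[Mq (cones i)] := mapDomainRingHom ℤ (QuotientAddGroup.mk' _) (a i)
  have hρ : ρ ∈ compatSubring cones := fun i j hji =>
    eq_of_forall_evalQAt_eq (hcone j) fun v hv => by
      have hvU : v ∈ ⋃ i, cones i := Set.mem_iUnion.2 ⟨j, hv⟩
      rw [evalQAt_restrictq, evalQAt_mapDomain_mk, evalQAt_mapDomain_mk,
        ← ha i ⟨v, hvU⟩ (hji hv), ← ha j ⟨v, hvU⟩ hv]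
  refine ⟨⟨ρ, hρ⟩, funext fun v => ?_⟩
  obtain ⟨i, hv⟩ := Set.mem_iUnion.1 v.2
  rw [glueCompat_apply hint _ v hv, evalQAt_mapDomain_mk, ha i v hv]

end Gluing

theorem pexp_iso_inverse_limit_general {n : ℕ} {ι : Type}
    (cones : ι → Set (Fin n → ℝ))
    (hfan : ∀ i, ∃ S : Finset (Fin n → ℤ), cones i =
      { v | ∃ c : (Fin n → ℤ) → ℝ, (∀ g, 0 ≤ c g) ∧
            v = ∑ g ∈ S, c g • (fun k => (g k : ℝ)) })
    (hint : ∀ i j, ∃ k, cones i ∩ cones j = cones k) :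
    ∃ e : pexpSubring cones ≃+* compatSubring cones,
      ∀ (f : pexpSubring cones) (i : ι) (v : (⋃ i, cones i : Set (Fin n → ℝ)))
        (hv : (v : Fin n → ℝ) ∈ cones i),
        evalQAt (cones i) (v : Fin n → ℝ) hv
            ((e f : Π i, AddMonoidAlgebra ℤ (Mq (cones i))) i)
          = (f : (⋃ i, cones i : Set (Fin n → ℝ)) → ℝ) v := by
  have hcone (i : ι) : ∃ S : AddSubmonoid (Fin n → ℝ), (S : Set (Fin n → ℝ)) = cones i := by
    obtain ⟨S, hS⟩ := hfan i
    exact hS ▸ exists_addSubmonoid_coe_eq_nonnegCombinations S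
  let glue := (glueCompat cones).codRestrict _ (glueCompat_mem_pexpSubring hint)
  have hglue : Function.Bijective glue :=
    ⟨fun ρ ρ' h => glueCompat_injective hint hcone (congrArg Subtype.val h),
      fun f => (exists_glueCompat_eq hint hcone f.2).imp fun _ hρ => Subtype.ext hρ⟩
  refine ⟨(RingEquiv.ofBijective glue hglue).symm, fun f i v hv => ?_⟩
  rw [← glueCompat_apply hint _ v hv]
  exact congrFun (congrArg Subtype.val ((RingEquiv.ofBijective glue hglue).apply_symm_apply f)) v

/-- for a fan `Δ`, the ring `PExp(Δ)` of integral piecewise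
exponential functions is isomorphic to the inverse limit over the face poset of
`Δ` of the group rings `ℤ[M_σ]`, i.e. to the ring of compatible tuples
`(ρ_σ) ∈ ∏_{σ ∈ Δ} ℤ[M_σ]`; the isomorphism matches `ρ_σ` with `f|_σ` (expressed
here by compatibility with evaluation at each point of each cone). -/
theorem pexp_iso_inverse_limit {n : ℕ} {ι : Type} [Fintype ι]
    (cones : ι → Set (Fin n → ℝ))
    (hfan : ∀ i, ∃ S : Finset (Fin n → ℤ), cones i =
      { v | ∃ c : (Fin n → ℤ) → ℝ, (∀ g, 0 ≤ c g) ∧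
            v = ∑ g ∈ S, c g • (fun k => (g k : ℝ)) })
    (hint : ∀ i j, ∃ k, cones i ∩ cones j = cones k) :
    ∃ e : pexpSubring cones ≃+* compatSubring cones,
      ∀ (f : pexpSubring cones) (i : ι) (v : (⋃ i, cones i : Set (Fin n → ℝ)))
        (hv : (v : Fin n → ℝ) ∈ cones i),
        evalQAt (cones i) (v : Fin n → ℝ) hv
            ((e f : Π i, AddMonoidAlgebra ℤ (Mq (cones i))) i)
          = (f : (⋃ i, cones i : Set (Fin n → ℝ)) → ℝ) v :=
  pexp_iso_inverse_limit_general cones hfan hint
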